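/- Let A, B ∈ ℝ^{m×n} have rank n with A = B C for invertible C ∈ ℝ^{n×n}; let E_A, E_B be perturbations with ε_A = ‖E_A‖/‖A‖, ε_B = ‖E_B‖/‖B‖. Let x* satisfy BᵀA x* = Bᵀ b, and suppose x̂ ≠ 0 satisfies (B+E_B)ᵀ(A+E_A) x̂ = (B+E_B)ᵀ b. Then ‖x̂ − x*‖/‖x̂‖ ≤ κ(BᵀA)·ν·( ε_B·‖A x̂ − b‖/(‖A‖·‖x̂‖) + (1+ε_B)·ε_A ), where ν = ‖B‖·‖A‖/‖BᵀA‖ and κ(BᵀA) = ‖BᵀA‖·‖(BᵀA)⁻¹‖. -/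

import Mathlib

open Matrix

/-- Spectral (operator 2-) norm of a real matrix. -/
noncomputable def spNorm {m n : ℕ} (M : Matrix (Fin m) (Fin n) ℝ) : ℝ :=
  ‖LinearMap.toContinuousLinearMap (Matrix.toEuclideanLin M)‖

/-- Euclidean 2-norm of a real vector. -/
noncomputable def vNorm {n : ℕ} (x : Fin n → ℝ) : ℝ :=
  ‖(WithLp.equiv 2 (Fin n → ℝ)).symm x‖

/-- Moore–Penrose left inverse of a full column rank matrix. -/
noncomputable def pinv {m n : ℕ} (A : Matrix (Fin m) (Fin n) ℝ) : Matrix (Fin n) (Fin m) ℝ :=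
  (Aᵀ * A)⁻¹ * Aᵀ

/-- Condition number with respect to left inversion. -/
noncomputable def kappa {m n : ℕ} (A : Matrix (Fin m) (Fin n) ℝ) : ℝ :=
  spNorm A * spNorm (pinv A)

/-!
Subtracting `Bᵀ A x* = Bᵀ b` from the perturbed equation gives the exact error representation
`Bᵀ A (x̂ - x*) = E_Bᵀ (b - (A + E_A) x̂) - Bᵀ E_A x̂`. The matrix `Bᵀ A = (Bᵀ B) C` is invertible,
so taking spectral norms bounds `‖x̂ - x*‖` by
`‖(Bᵀ A)⁻¹‖ (‖E_B‖ (‖A x̂ - b‖ + ‖E_A‖ ‖x̂‖) + ‖B‖ ‖E_A‖ ‖x̂‖)`,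
which after dividing by `‖x̂‖` is the claimed bound rewritten in terms of `ε_A`, `ε_B`, `ν` and `κ`.
-/

open scoped Matrix.Norms.L2Operator

section Invertibility

variable {K : Type*} [Field K] [LinearOrder K] [IsStrictOrderedRing K]
  {m n : Type*} [Fintype m] [Fintype n] [DecidableEq n]

theorem Matrix.isUnit_det_transpose_mul_self_of_rank_eq_card {B : Matrix m n K}
    (hB : B.rank = Fintype.card n) : IsUnit (Bᵀ * B).det := by
  rw [← isUnit_iff_isUnit_det, ← linearIndependent_cols_iff_isUnit,
    linearIndependent_iff_card_eq_finrank_span, ← hB, ← rank_transpose_mul_self,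
    rank_eq_finrank_span_cols]
  rfl

theorem Matrix.isUnit_det_transpose_mul_of_eq_mul {A B : Matrix m n K} {C : Matrix n n K}
    (hB : B.rank = Fintype.card n) (hC : IsUnit C.det) (hAC : A = B * C) :
    IsUnit (Bᵀ * A).det := by
  rw [hAC, ← Matrix.mul_assoc, det_mul]
  exact (isUnit_det_transpose_mul_self_of_rank_eq_card hB).mul hC

end Invertibility

theorem Matrix.transpose_mul_mulVec_sub_of_perturbed {R : Type*} [CommRing R]
    {m n : Type*} [Fintype m] [Fintype n] {A B EA EB : Matrix m n R} {b : m → R} {xs xh : n → R}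
    (hxs : (Bᵀ * A) *ᵥ xs = Bᵀ *ᵥ b)
    (hxh : ((B + EB)ᵀ * (A + EA)) *ᵥ xh = (B + EB)ᵀ *ᵥ b) :
    (Bᵀ * A) *ᵥ (xh - xs) = EBᵀ *ᵥ (b - (A + EA) *ᵥ xh) - Bᵀ *ᵥ (EA *ᵥ xh) := by
  rw [← mulVec_mulVec] at hxs hxh
  simp only [transpose_add, add_mulVec, mulVec_add, mulVec_sub, ← mulVec_mulVec] at hxh ⊢
  linear_combination hxh - hxs

section Norms

variable {m n : ℕ}

lemma spNorm_eq_norm (M : Matrix (Fin m) (Fin n) ℝ) : spNorm M = ‖M‖ := rfl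

lemma spNorm_nonneg (M : Matrix (Fin m) (Fin n) ℝ) : 0 ≤ spNorm M := norm_nonneg _

lemma spNorm_pos {M : Matrix (Fin m) (Fin n) ℝ} (hM : M ≠ 0) : 0 < spNorm M := by
  rw [spNorm_eq_norm]
  exact norm_pos_iff.mpr hM

lemma spNorm_transpose (M : Matrix (Fin m) (Fin n) ℝ) : spNorm Mᵀ = spNorm M := by
  rw [spNorm_eq_norm, spNorm_eq_norm, ← conjTranspose_eq_transpose_of_trivial]
  exact l2_opNorm_conjTranspose M

lemma vNorm_pos {x : Fin n → ℝ} (hx : x ≠ 0) : 0 < vNorm x :=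
  norm_pos_iff.mpr fun h => hx ((WithLp.equiv 2 (Fin n → ℝ)).symm.injective h)

lemma vNorm_sub_le (x y : Fin n → ℝ) : vNorm (x - y) ≤ vNorm x + vNorm y :=
  norm_sub_le _ _

lemma vNorm_sub_rev (x y : Fin n → ℝ) : vNorm (x - y) = vNorm (y - x) :=
  norm_sub_rev _ _

lemma vNorm_mulVec_le (M : Matrix (Fin m) (Fin n) ℝ) (x : Fin n → ℝ) :
    vNorm (M *ᵥ x) ≤ spNorm M * vNorm x :=
  M.l2_opNorm_mulVec _

lemma vNorm_mulVec_sub_mulVec_le {k : ℕ} (M : Matrix (Fin m) (Fin n) ℝ)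
    (N : Matrix (Fin m) (Fin k) ℝ) (x : Fin n → ℝ) (y : Fin k → ℝ) :
    vNorm (M *ᵥ x - N *ᵥ y) ≤ spNorm M * vNorm x + spNorm N * vNorm y :=
  (vNorm_sub_le _ _).trans (add_le_add (vNorm_mulVec_le M x) (vNorm_mulVec_le N y))

end Norms

theorem vNorm_sub_le_of_perturbed {m n : ℕ} {A B EA EB : Matrix (Fin m) (Fin n) ℝ}
    {b : Fin m → ℝ} {xs xh : Fin n → ℝ} (hD : IsUnit (Bᵀ * A).det)
    (hxs : (Bᵀ * A) *ᵥ xs = Bᵀ *ᵥ b)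
    (hxh : ((B + EB)ᵀ * (A + EA)) *ᵥ xh = (B + EB)ᵀ *ᵥ b) :
    vNorm (xh - xs) ≤ spNorm (Bᵀ * A)⁻¹ *
      (spNorm EB * (vNorm (A *ᵥ xh - b) + spNorm EA * vNorm xh)
        + spNorm B * (spNorm EA * vNorm xh)) := by
  have hres : vNorm (b - (A + EA) *ᵥ xh) ≤ vNorm (A *ᵥ xh - b) + spNorm EA * vNorm xh := by
    rw [add_mulVec, ← sub_sub, vNorm_sub_rev (A *ᵥ xh)]
    exact (vNorm_sub_le _ _).trans (add_le_add le_rfl (vNorm_mulVec_le EA xh))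
  have herr : xh - xs = (Bᵀ * A)⁻¹ *ᵥ (EBᵀ *ᵥ (b - (A + EA) *ᵥ xh) - Bᵀ *ᵥ (EA *ᵥ xh)) := by
    rw [← transpose_mul_mulVec_sub_of_perturbed hxs hxh, mulVec_mulVec, nonsing_inv_mul _ hD,
      one_mulVec]
  calc vNorm (xh - xs)
      ≤ spNorm (Bᵀ * A)⁻¹ * vNorm (EBᵀ *ᵥ (b - (A + EA) *ᵥ xh) - Bᵀ *ᵥ (EA *ᵥ xh)) := by
        rw [herr]; exact vNorm_mulVec_le _ _
    _ ≤ spNorm (Bᵀ * A)⁻¹ * (spNorm EB * (vNorm (A *ᵥ xh - b) + spNorm EA * vNorm xh)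
          + spNorm B * (spNorm EA * vNorm xh)) := by
        gcongr
        · exact spNorm_nonneg _
        refine (vNorm_mulVec_sub_mulVec_le _ _ _ _).trans ?_
        rw [spNorm_transpose, spNorm_transpose]
        exact add_le_add (mul_le_mul_of_nonneg_left hres (spNorm_nonneg _))
          (mul_le_mul_of_nonneg_left (vNorm_mulVec_le EA xh) (spNorm_nonneg _))

theorem stmt_11_general {m n : ℕ} (A B EA EB : Matrix (Fin m) (Fin n) ℝ)
    (C : Matrix (Fin n) (Fin n) ℝ)
    (hB : B.rank = n) (hC : IsUnit C.det) (hAC : A = B * C)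
    (b : Fin m → ℝ) (xs xh : Fin n → ℝ)
    (εA εB : ℝ) (hεA : εA = spNorm EA / spNorm A) (hεB : εB = spNorm EB / spNorm B)
    (hxs : (Bᵀ * A) *ᵥ xs = Bᵀ *ᵥ b)
    (hxh : ((B + EB)ᵀ * (A + EA)) *ᵥ xh = (B + EB)ᵀ *ᵥ b)
    (hne : xh ≠ 0)
    (ν : ℝ) (hν : ν = spNorm B * spNorm A / spNorm (Bᵀ * A))
    (κ : ℝ) (hκ : κ = spNorm (Bᵀ * A) * spNorm (Bᵀ * A)⁻¹) :
    vNorm (xh - xs) / vNorm xh ≤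
      κ * ν * (εB * (vNorm (A *ᵥ xh - b) / (spNorm A * vNorm xh)) + (1 + εB) * εA) := by
  have hD : IsUnit (Bᵀ * A).det :=
    isUnit_det_transpose_mul_of_eq_mul (by rwa [Fintype.card_fin]) hC hAC
  -- `xh ≠ 0` rules out `n = 0`, where the invertible matrix `Bᵀ * A` would be `0`.
  have : Nonempty (Fin n) := by
    obtain ⟨i, -⟩ := Function.ne_iff.mp hne
    exact ⟨i⟩
  have hDne : Bᵀ * A ≠ 0 := ((isUnit_iff_isUnit_det _).mpr hD).ne_zero
  have hApos : 0 < spNorm A := spNorm_pos fun h => hDne (by rw [h, Matrix.mul_zero])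
  have hBpos : 0 < spNorm B :=
    spNorm_pos fun h => hDne (by rw [h, transpose_zero, Matrix.zero_mul])
  have hxpos : 0 < vNorm xh := vNorm_pos hne
  rw [div_le_iff₀ hxpos]
  refine (vNorm_sub_le_of_perturbed hD hxs hxh).trans_eq ?_
  subst hκ hν hεA hεB
  field_simp [(spNorm_pos hDne).ne', hApos.ne', hBpos.ne', hxpos.ne']
  ring

theorem stmt_11 {m n : ℕ} (A B EA EB : Matrix (Fin m) (Fin n) ℝ)
    (C : Matrix (Fin n) (Fin n) ℝ)
    (hA : A.rank = n) (hB : B.rank = n) (hC : IsUnit C.det) (hAC : A = B * C)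
    (b : Fin m → ℝ) (xs xh : Fin n → ℝ)
    (εA εB : ℝ) (hεA : εA = spNorm EA / spNorm A) (hεB : εB = spNorm EB / spNorm B)
    (hxs : (Bᵀ * A) *ᵥ xs = Bᵀ *ᵥ b)
    (hxh : ((B + EB)ᵀ * (A + EA)) *ᵥ xh = (B + EB)ᵀ *ᵥ b)
    (hne : xh ≠ 0)
    (ν : ℝ) (hν : ν = spNorm B * spNorm A / spNorm (Bᵀ * A))
    (κ : ℝ) (hκ : κ = spNorm (Bᵀ * A) * spNorm (Bᵀ * A)⁻¹) :
    vNorm (xh - xs) / vNorm xh ≤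
      κ * ν * (εB * (vNorm (A *ᵥ xh - b) / (spNorm A * vNorm xh)) + (1 + εB) * εA) :=
  stmt_11_general A B EA EB C hB hC hAC b xs xh εA εB hεA hεB hxs hxh hne ν hν κ hκ
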